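/- arXiv:1312.5675 — 5 statements merged into one kernel-verified Lean document; each statement's English description precedes it below -/
import Mathlib

section
/- Let n ≥ 2 and d ≥ 1 be integers with nd > 2, and set A = n(dn + d − 2n) (an even integer). If A is divisible by 4, then the quotient of ℤ × ℤ by the subgroup generated by (0, 12) and (2n², A) is isomorphic as an abelian group to ℤ/3ℤ × ℤ/4ℤ × ℤ/(2n²)ℤ. -/
private lemma aux3 : ∀ x y : ZMod 3, (x * (y * x + y - 2 * x)) * (1 - 4 * x ^ 4) = 0 := by
  decide

/-- Theorem A(2) of the paper, genus 1, `n*d > 2`, `A = n(dn+d-2n)` divisible by 4: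
the quotient of `ℤ × ℤ` by the subgroup generated by `(0, 12)` and `(2n², A)` is
isomorphic to `ℤ/3ℤ × ℤ/4ℤ × ℤ/(2n²)ℤ`. -/
theorem stmt_0 (n d : ℕ) (hn : 2 ≤ n) (hd : 1 ≤ d) (hnd : 2 < n * d)
    (h4 : (4 : ℤ) ∣ (n : ℤ) * ((d : ℤ) * (n : ℤ) + (d : ℤ) - 2 * (n : ℤ))) :
    Nonempty (((ℤ × ℤ) ⧸ AddSubgroup.closure
        {(((0 : ℤ), (12 : ℤ)) : ℤ × ℤ),
         (((2 * (n : ℤ) ^ 2 : ℤ),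
           ((n : ℤ) * ((d : ℤ) * (n : ℤ) + (d : ℤ) - 2 * (n : ℤ)) : ℤ)) : ℤ × ℤ)})
      ≃+ (ZMod 3 × ZMod 4 × ZMod (2 * n ^ 2))) := by
  have hn0 : n ≠ 0 := by omega
  haveI : NeZero (2 * n ^ 2) := ⟨by positivity⟩
  obtain ⟨c, hc⟩ := h4
  set A : ℤ := (n : ℤ) * ((d : ℤ) * (n : ℤ) + (d : ℤ) - 2 * (n : ℤ)) with hA
  set k : ℤ := 8 * c * (n : ℤ) ^ 2 with hk
  have hc' : (n : ℤ) * ((d : ℤ) * (n : ℤ) + (d : ℤ) - 2 * (n : ℤ)) = 4 * c := hA ▸ hc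
  have hE : A - 2 * (n : ℤ) ^ 2 * k = 4 * c * (1 - 4 * (n : ℤ) ^ 4) := by
    linear_combination hc - 2 * (n : ℤ) ^ 2 * hk
  have h3 : (3 : ℤ) ∣ 4 * c * (1 - 4 * (n : ℤ) ^ 4) := by
    have hc3 : ((n : ZMod 3)) * ((d : ZMod 3) * n + d - 2 * n) = 4 * (c : ZMod 3) := by
      have := congrArg (Int.cast : ℤ → ZMod 3) hc'
      push_cast at this
      exact this
    have h0 : ((4 * c * (1 - 4 * (n : ℤ) ^ 4) : ℤ) : ZMod 3) = 0 := by
      push_cast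
      linear_combination (-(1 - 4 * (n : ZMod 3) ^ 4)) * hc3 + aux3 (n : ZMod 3) (d : ZMod 3)
    exact_mod_cast (ZMod.intCast_zmod_eq_zero_iff_dvd _ 3).mp h0
  have h4' : (4 : ℤ) ∣ 4 * c * (1 - 4 * (n : ℤ) ^ 4) := ⟨c * (1 - 4 * (n : ℤ) ^ 4), by ring⟩
  have h12 : (12 : ℤ) ∣ A - 2 * (n : ℤ) ^ 2 * k := by
    rw [hE]
    have hcop : IsCoprime (3 : ℤ) 4 := by norm_num
    have := hcop.mul_dvd h3 h4'
    norm_num at this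
    exact this
  obtain ⟨m, hm⟩ := h12
  let f : ℤ × ℤ →+ (ZMod 3 × ZMod 4 × ZMod (2 * n ^ 2)) :=
    AddMonoidHom.mk' (fun p => (((p.2 - k * p.1 : ℤ) : ZMod 3),
        ((p.2 - k * p.1 : ℤ) : ZMod 4), ((p.1 : ℤ) : ZMod (2 * n ^ 2))))
      (by
        intro p q
        simp only [Prod.fst_add, Prod.snd_add, Prod.mk_add_mk, Prod.mk.injEq]
        refine ⟨?_, ?_, ?_⟩ <;> push_cast <;> ring)
  have hfapp : ∀ p : ℤ × ℤ, f p = (((p.2 - k * p.1 : ℤ) : ZMod 3),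
      ((p.2 - k * p.1 : ℤ) : ZMod 4), ((p.1 : ℤ) : ZMod (2 * n ^ 2))) := fun p => rfl
  have hsurj : Function.Surjective f := by
    rintro ⟨a, b, e⟩
    refine ⟨((e.val : ℤ), k * (e.val : ℤ) + 4 * (a.val : ℤ) - 3 * (b.val : ℤ)), ?_⟩
    rw [hfapp]
    refine Prod.ext ?_ (Prod.ext ?_ ?_)
    · show ((k * (e.val : ℤ) + 4 * (a.val : ℤ) - 3 * (b.val : ℤ) - k * (e.val : ℤ) : ℤ) : ZMod 3) = a
      have h1 : (k * (e.val : ℤ) + 4 * (a.val : ℤ) - 3 * (b.val : ℤ) - k * (e.val : ℤ) : ℤ)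
          = 4 * (a.val : ℤ) - 3 * (b.val : ℤ) := by ring
      rw [h1]
      push_cast
      have : ((3 : ℕ) : ZMod 3) = 0 := ZMod.natCast_self 3
      simp [ZMod.natCast_val, ZMod.cast_id]
      rw [show ((4 : ZMod 3)) = 1 by decide, show ((3 : ZMod 3)) = 0 by decide]
      ring
    · show ((k * (e.val : ℤ) + 4 * (a.val : ℤ) - 3 * (b.val : ℤ) - k * (e.val : ℤ) : ℤ) : ZMod 4) = b
      have h1 : (k * (e.val : ℤ) + 4 * (a.val : ℤ) - 3 * (b.val : ℤ) - k * (e.val : ℤ) : ℤ)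
          = 4 * (a.val : ℤ) - 3 * (b.val : ℤ) := by ring
      rw [h1]
      push_cast
      simp [ZMod.natCast_val, ZMod.cast_id]
      rw [show ((4 : ZMod 4)) = 0 by decide, show ((3 : ZMod 4)) = -1 by decide]
      ring
    · show (((e.val : ℤ) : ℤ) : ZMod (2 * n ^ 2)) = e
      push_cast
      simp [ZMod.natCast_val, ZMod.cast_id]
  have hker : AddSubgroup.closure
      {(((0 : ℤ), (12 : ℤ)) : ℤ × ℤ), (((2 * (n : ℤ) ^ 2 : ℤ), A) : ℤ × ℤ)} = f.ker := by
    apply le_antisymm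
    · rw [AddSubgroup.closure_le]
      rintro p hp
      simp only [Set.mem_insert_iff, Set.mem_singleton_iff] at hp
      rcases hp with rfl | rfl
      · rw [SetLike.mem_coe, AddMonoidHom.mem_ker, hfapp]
        refine Prod.ext ?_ (Prod.ext ?_ ?_) <;> simp <;> decide
      · rw [SetLike.mem_coe, AddMonoidHom.mem_ker, hfapp]
        refine Prod.ext ?_ (Prod.ext ?_ ?_)
        · show ((A - k * (2 * (n : ℤ) ^ 2) : ℤ) : ZMod 3) = 0
          have h1 : (A - k * (2 * (n : ℤ) ^ 2) : ℤ) = 4 * c * (1 - 4 * (n : ℤ) ^ 4) := by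
            rw [← hE]; ring
          rw [h1, ZMod.intCast_zmod_eq_zero_iff_dvd]
          exact_mod_cast h3
        · show ((A - k * (2 * (n : ℤ) ^ 2) : ℤ) : ZMod 4) = 0
          have h1 : (A - k * (2 * (n : ℤ) ^ 2) : ℤ) = 4 * c * (1 - 4 * (n : ℤ) ^ 4) := by
            rw [← hE]; ring
          rw [h1, ZMod.intCast_zmod_eq_zero_iff_dvd]
          exact_mod_cast h4'
        · show (((2 * (n : ℤ) ^ 2 : ℤ)) : ZMod (2 * n ^ 2)) = 0
          rw [ZMod.intCast_zmod_eq_zero_iff_dvd]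
          push_cast
          rfl
    · rintro ⟨x, y⟩ hxy
      rw [AddMonoidHom.mem_ker, hfapp] at hxy
      rw [Prod.ext_iff, Prod.ext_iff] at hxy
      simp only [Prod.fst_zero, Prod.snd_zero] at hxy
      obtain ⟨h1, h2, h3'⟩ := hxy
      have hx : ((2 * n ^ 2 : ℕ) : ℤ) ∣ x := (ZMod.intCast_zmod_eq_zero_iff_dvd _ _).mp h3'
      have hx' : (2 * (n : ℤ) ^ 2) ∣ x := by push_cast at hx; exact hx
      obtain ⟨s, hs⟩ := hx'
      have hy3 : (3 : ℤ) ∣ y - k * x := by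
        have := (ZMod.intCast_zmod_eq_zero_iff_dvd (y - k * x) 3).mp h1
        exact_mod_cast this
      have hy4 : (4 : ℤ) ∣ y - k * x := by
        have := (ZMod.intCast_zmod_eq_zero_iff_dvd (y - k * x) 4).mp h2
        exact_mod_cast this
      have hy12 : (12 : ℤ) ∣ y - k * x := by
        have hcop : IsCoprime (3 : ℤ) 4 := by norm_num
        have := hcop.mul_dvd hy3 hy4
        norm_num at this
        exact this
      obtain ⟨t, ht⟩ := hy12
      have heq : ((x, y) : ℤ × ℤ)
          = s • (((2 * (n : ℤ) ^ 2 : ℤ), A) : ℤ × ℤ) + (t - m * s) • (((0 : ℤ), (12 : ℤ)) : ℤ × ℤ) := by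
        refine Prod.ext ?_ ?_
        · simp only [Prod.fst_add, Prod.smul_fst, smul_eq_mul]
          linarith [hs]
        · simp only [Prod.snd_add, Prod.smul_snd, smul_eq_mul]
          linear_combination ht - s * hm + k * hs
      rw [heq]
      exact AddSubgroup.add_mem _
        (AddSubgroup.zsmul_mem _ (AddSubgroup.subset_closure (by simp)) s)
        (AddSubgroup.zsmul_mem _ (AddSubgroup.subset_closure (by simp)) _)
  rw [hker]
  exact ⟨QuotientAddGroup.quotientKerEquivOfSurjective f hsurj⟩
end

section
/- For every odd integer n ≥ 3, the quotient of ℤ × ℤ × ℤ by the subgroup generated by (−2n², n(n+1), n(n−1)) and (10, 0, 0) is isomorphic as an abelian group to ℤ/(2n)ℤ × ℤ/10ℤ × ℤ. -/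
/-- Explicit automorphism of `ℤ³` (composition of elementary column operations). -/
def myAut (n k : ℤ) : (ℤ × ℤ × ℤ) ≃+ (ℤ × ℤ × ℤ) where
  toFun v := (v.1 + n * (v.2.1 - v.2.2), v.2.1 - v.2.2, v.2.2 - k * (v.2.1 - v.2.2))
  invFun v := (v.1 - n * v.2.1, v.2.1 + v.2.2 + k * v.2.1, v.2.2 + k * v.2.1)
  left_inv v := by
    obtain ⟨a, b, c⟩ := v
    simp only [Prod.mk.injEq]
    refine ⟨by ring, by ring, by ring⟩
  right_inv v := by
    obtain ⟨a, b, c⟩ := v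
    simp only [Prod.mk.injEq]
    refine ⟨by ring, by ring, by ring⟩
  map_add' u v := by
    obtain ⟨a, b, c⟩ := u
    obtain ⟨a', b', c'⟩ := v
    simp only [Prod.fst_add, Prod.snd_add, Prod.mk_add_mk, Prod.mk.injEq]
    refine ⟨by ring, by ring, by ring⟩

/-- Projection `ℤ³ → ℤ/N × ℤ/10 × ℤ`, `(a,b,c) ↦ (b mod N, a mod 10, c)`. -/
def myHom (N : ℕ) : (ℤ × ℤ × ℤ) →+ (ZMod N × ZMod 10 × ℤ) where
  toFun v := ((v.2.1 : ZMod N), ((v.1 : ZMod 10), v.2.2))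
  map_zero' := by simp
  map_add' u v := by simp

set_option maxHeartbeats 1000000 in
/-- For every odd `n ≥ 3`, the quotient of `ℤ × ℤ × ℤ` by the subgroup generated by
`(-2n², n(n+1), n(n-1))` and `(10, 0, 0)` is isomorphic to `ℤ/(2n)ℤ × ℤ/10ℤ × ℤ`. -/
theorem stmt_7 (n : ℕ) (hn : 3 ≤ n) (hno : Odd n) :
    Nonempty (((ℤ × ℤ × ℤ) ⧸ AddSubgroup.closure
        {(((-2 * (n : ℤ) ^ 2 : ℤ), ((n : ℤ) * ((n : ℤ) + 1) : ℤ),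
           ((n : ℤ) * ((n : ℤ) - 1) : ℤ)) : ℤ × ℤ × ℤ),
         (((10 : ℤ), (0 : ℤ), (0 : ℤ)) : ℤ × ℤ × ℤ)})
      ≃+ (ZMod (2 * n) × ZMod 10 × ℤ)) := by
  obtain ⟨m, hm⟩ := hno
  have hnm : (n : ℤ) = 2 * (m : ℤ) + 1 := by exact_mod_cast congrArg (Nat.cast : ℕ → ℤ) hm
  set e := myAut (n : ℤ) (m : ℤ) with he
  set v₁ : ℤ × ℤ × ℤ := ((-2 * (n : ℤ) ^ 2 : ℤ), ((n : ℤ) * ((n : ℤ) + 1) : ℤ),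
      ((n : ℤ) * ((n : ℤ) - 1) : ℤ)) with hv₁
  set v₂ : ℤ × ℤ × ℤ := (((10 : ℤ), (0 : ℤ), (0 : ℤ)) : ℤ × ℤ × ℤ) with hv₂
  have hev₁ : e v₁ = ((0 : ℤ), (2 * (n : ℤ) : ℤ), (0 : ℤ)) := by
    show ((_ : ℤ), (_ : ℤ), (_ : ℤ)) = _
    simp only [myAut, AddEquiv.coe_mk, Equiv.coe_fn_mk, hv₁, Prod.mk.injEq]
    refine ⟨by ring, by ring, by rw [hnm]; ring⟩
  have hev₂ : e v₂ = (((10 : ℤ), (0 : ℤ), (0 : ℤ)) : ℤ × ℤ × ℤ) := by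
    show ((_ : ℤ), (_ : ℤ), (_ : ℤ)) = _
    simp only [myAut, AddEquiv.coe_mk, Equiv.coe_fn_mk, hv₂, Prod.mk.injEq]
    refine ⟨by ring, by ring, by ring⟩
  -- the image of the closure under `e`
  have hmap : (AddSubgroup.closure {v₁, v₂}).map e.toAddMonoidHom =
      AddSubgroup.closure {(((0 : ℤ), (2 * (n : ℤ) : ℤ), (0 : ℤ)) : ℤ × ℤ × ℤ),
        (((10 : ℤ), (0 : ℤ), (0 : ℤ)) : ℤ × ℤ × ℤ)} := by
    rw [AddMonoidHom.map_closure]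
    congr 1
    rw [Set.image_insert_eq, Set.image_singleton]
    simp only [AddEquiv.toAddMonoidHom_eq_coe, AddMonoidHom.coe_coe]
    rw [hev₁, hev₂]
  -- kernel of `myHom (2*n)` equals that closure
  have hker : (myHom (2 * n)).ker =
      AddSubgroup.closure {(((0 : ℤ), (2 * (n : ℤ) : ℤ), (0 : ℤ)) : ℤ × ℤ × ℤ),
        (((10 : ℤ), (0 : ℤ), (0 : ℤ)) : ℤ × ℤ × ℤ)} := by
      apply le_antisymm
      · rintro ⟨a, b, c⟩ hx
        rw [AddMonoidHom.mem_ker] at hx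
        have h1 : ((b : ZMod (2 * n)) = 0) := congrArg Prod.fst hx
        have h2 : ((a : ZMod 10) = 0) := congrArg Prod.fst (congrArg Prod.snd hx)
        have h3 : (c = 0) := congrArg (Prod.snd ∘ Prod.snd) hx
        obtain ⟨p, hp⟩ := (ZMod.intCast_zmod_eq_zero_iff_dvd b (2 * n)).mp h1
        obtain ⟨q, hq⟩ := (ZMod.intCast_zmod_eq_zero_iff_dvd a 10).mp h2
        rw [AddSubgroup.mem_closure_pair]
        refine ⟨p, q, ?_⟩
        rw [hp, hq, h3]
        have : ∀ (m : ℤ) (x y z : ℤ), m • ((x, y, z) : ℤ × ℤ × ℤ) = (m * x, m * y, m * z) := by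
          intro m x y z
          rfl
        rw [this, this, Prod.mk_add_mk, Prod.mk_add_mk, Prod.mk.injEq, Prod.mk.injEq]
        push_cast
        refine ⟨by ring, by ring, by ring⟩
      · rw [AddSubgroup.closure_le]
        rintro x (rfl | rfl) <;>
            simp only [SetLike.mem_coe, AddMonoidHom.mem_ker, myHom, AddMonoidHom.coe_mk,
              ZeroHom.coe_mk, Prod.mk_eq_zero]
        · refine ⟨?_, by norm_num, trivial⟩
          exact (ZMod.intCast_zmod_eq_zero_iff_dvd _ _).mpr ⟨1, by push_cast; ring⟩
        · refine ⟨by norm_num, ?_, trivial⟩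
          exact (ZMod.intCast_zmod_eq_zero_iff_dvd _ _).mpr ⟨1, by norm_num⟩
  have hsurj : Function.Surjective (myHom (2 * n)) := by
    rintro ⟨x, y, z⟩
    obtain ⟨a, rfl⟩ := ZMod.intCast_surjective y
    obtain ⟨b, rfl⟩ := ZMod.intCast_surjective x
    exact ⟨(a, b, z), rfl⟩
  have e2 : ((ℤ × ℤ × ℤ) ⧸ AddSubgroup.closure {v₁, v₂}) ≃+
      ((ℤ × ℤ × ℤ) ⧸ (myHom (2 * n)).ker) := by
    rw [hker]
    exact QuotientAddGroup.congr _ _ e hmap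
  exact ⟨e2.trans (QuotientAddGroup.quotientKerEquivOfSurjective _ hsurj)⟩
end

section
/- For every even integer n ≥ 2, the quotient of ℤ × ℤ × ℤ by the subgroup generated by (−2n², n(n+1), n(n−1)) and (10, 0, 0) is isomorphic as an abelian group to ℤ/nℤ × ℤ/10ℤ × ℤ. -/
/-!
Write `n = 2c`. The integer matrix with columns `(-2n, n+1, n-1)`, `(1, 0, 0)`, `(0, c, c-1)` has
determinant `1`, so it is an automorphism of `ℤ³`; it sends `(n, 0, 0)` to `(-2n², n(n+1), n(n-1))`
and `(0, 10, 0)` to `(10, 0, 0)`. The quotient is therefore isomorphic to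
`ℤ³ / ⟨(n, 0, 0), (0, 10, 0)⟩ ≅ ℤ/n × ℤ/10 × ℤ`.
-/

open AddSubgroup QuotientAddGroup

lemma closure_pair_axes (a b : ℤ) :
    AddSubgroup.closure {((a, 0, 0) : ℤ × ℤ × ℤ), (0, b, 0)} =
      (zmultiples a).prod ((zmultiples b).prod ⊥) := by
  ext ⟨x, y, z⟩
  simp only [mem_closure_pair, mem_prod, mem_zmultiples_iff, mem_bot, Prod.ext_iff, Prod.smul_mk,
    Prod.mk_add_mk, smul_eq_mul, mul_zero, add_zero, zero_add]
  constructor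
  · rintro ⟨k, l, rfl, rfl, rfl⟩
    exact ⟨⟨k, rfl⟩, ⟨l, rfl⟩, rfl⟩
  · rintro ⟨⟨k, rfl⟩, ⟨l, rfl⟩, rfl⟩
    exact ⟨k, l, rfl, rfl, rfl⟩

def quotientAxesEquiv (a b : ℕ) :
    (ℤ × ℤ × ℤ) ⧸ AddSubgroup.closure {(((a : ℤ), 0, 0) : ℤ × ℤ × ℤ), (0, (b : ℤ), 0)} ≃+
      ZMod a × ZMod b × ℤ :=
  (quotientAddEquivOfEq (closure_pair_axes a b)).trans <|
    (prodAddEquiv _ _).trans <| (Int.quotientZMultiplesNatEquivZMod a).prodCongr <|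
      (prodAddEquiv _ _).trans <| (Int.quotientZMultiplesNatEquivZMod b).prodCongr quotientBot

def basisChangeEquiv (c : ℤ) : (ℤ × ℤ × ℤ) ≃+ (ℤ × ℤ × ℤ) where
  toFun p := (-4 * c * p.1 + p.2.1, (2 * c + 1) * p.1 + c * p.2.2,
    (2 * c - 1) * p.1 + (c - 1) * p.2.2)
  invFun p := (-(c - 1) * p.2.1 + c * p.2.2,
    p.1 - 4 * c * (c - 1) * p.2.1 + 4 * c ^ 2 * p.2.2, (2 * c - 1) * p.2.1 - (2 * c + 1) * p.2.2)
  left_inv := by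
    rintro ⟨x, y, z⟩
    ext <;> dsimp only <;> ring
  right_inv := by
    rintro ⟨x, y, z⟩
    ext <;> dsimp only <;> ring
  map_add' := by
    rintro ⟨x, y, z⟩ ⟨x', y', z'⟩
    ext <;> dsimp only [Prod.mk_add_mk] <;> ring

def relationVector (n : ℤ) : ℤ × ℤ × ℤ := (-2 * n ^ 2, n * (n + 1), n * (n - 1))

lemma map_basisChangeEquiv_closure_pair_axes (c b : ℤ) :
    (AddSubgroup.closure {((2 * c, 0, 0) : ℤ × ℤ × ℤ), (0, b, 0)}).map (basisChangeEquiv c) =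
      AddSubgroup.closure {relationVector (2 * c), (b, 0, 0)} := by
  have h₁ : basisChangeEquiv c (2 * c, 0, 0) = relationVector (2 * c) := by
    simp only [basisChangeEquiv, relationVector, AddEquiv.coe_mk, Equiv.coe_fn_mk]
    ext <;> ring
  have h₂ : basisChangeEquiv c (0, b, 0) = (b, 0, 0) := by
    simp [basisChangeEquiv]
  rw [AddMonoidHom.map_closure, Set.image_insert_eq, Set.image_singleton]
  simp [h₁, h₂]

theorem stmt_8_general (n : ℕ) (hne : Even n) :
    Nonempty (((ℤ × ℤ × ℤ) ⧸ AddSubgroup.closure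
        {(((-2 * (n : ℤ) ^ 2 : ℤ), ((n : ℤ) * ((n : ℤ) + 1) : ℤ),
           ((n : ℤ) * ((n : ℤ) - 1) : ℤ)) : ℤ × ℤ × ℤ),
         (((10 : ℤ), (0 : ℤ), (0 : ℤ)) : ℤ × ℤ × ℤ)})
      ≃+ (ZMod n × ZMod 10 × ℤ)) := by
  obtain ⟨c, rfl⟩ := hne
  have hmap := map_basisChangeEquiv_closure_pair_axes c 10
  rw [show 2 * (c : ℤ) = ((c + c : ℕ) : ℤ) by push_cast; ring] at hmap
  exact ⟨(QuotientAddGroup.congr _ _ (basisChangeEquiv c) hmap).symm.trans (quotientAxesEquiv (c + c) 10)⟩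

/-- For every even `n ≥ 2`, the quotient of `ℤ × ℤ × ℤ` by the subgroup generated by
`(-2n², n(n+1), n(n-1))` and `(10, 0, 0)` is isomorphic to `ℤ/nℤ × ℤ/10ℤ × ℤ`. -/
theorem stmt_8 (n : ℕ) (hn : 2 ≤ n) (hne : Even n) :
    Nonempty (((ℤ × ℤ × ℤ) ⧸ AddSubgroup.closure
        {(((-2 * (n : ℤ) ^ 2 : ℤ), ((n : ℤ) * ((n : ℤ) + 1) : ℤ),
           ((n : ℤ) * ((n : ℤ) - 1) : ℤ)) : ℤ × ℤ × ℤ),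
         (((10 : ℤ), (0 : ℤ), (0 : ℤ)) : ℤ × ℤ × ℤ)})
      ≃+ (ZMod n × ZMod 10 × ℤ)) :=
  stmt_8_general n hne
end

section
/- Let R be a commutative local ring with maximal ideal m, let S be a commutative R-algebra that is flat as an R-module, and let M be an R-module of finite length. Then, computing lengths in ℕ∞, the length of the S-module S ⊗_R M equals the length of the S-module S/mS multiplied by the length of the R-module M. -/
open TensorProduct

/-- The length of a module over a ring, valued in `ℕ∞`: the supremum of the lengths of
chains of submodules (i.e. the Krull dimension of the lattice of submodules). -/
noncomputable def moduleLength (R M : Type*) [Semiring R] [AddCommGroup M] [Module R M] :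
    ℕ∞ :=
  WithBot.unbotD 0 (Order.krullDim (Submodule R M))

/-!
Base change along the flat map `R → S` is exact, so `N ↦ length_S (S ⊗[R] N)` is additive on
short exact sequences of `R`-modules, just as `length_R` is. Over the local ring `R` every
simple module is `R ⧸ m`, for which `S ⊗[R] (R ⧸ m) ≃ S ⧸ mS`; induction along a composition
series of `M` then gives the formula.
-/

theorem moduleLength_eq_length (R M : Type*) [Ring R] [AddCommGroup M] [Module R M] :
    moduleLength R M = Module.length R M := by
  rw [moduleLength, ← Module.coe_length, WithBot.unbotD_coe]

section BaseChange

variable {R S : Type*} [CommRing R] [CommRing S] [Algebra R S]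

theorem Module.length_baseChange_eq_add_of_flat [Module.Flat R S]
    {M : Type*} [AddCommGroup M] [Module R M] (N : Submodule R M) :
    Module.length S (S ⊗[R] M) =
      Module.length S (S ⊗[R] N) + Module.length S (S ⊗[R] (M ⧸ N)) := by
  refine Module.length_eq_add_of_exact (N.subtype.baseChange S) (N.mkQ.baseChange S) ?_ ?_ ?_
  all_goals simp only [LinearMap.baseChange_eq_ltensor]
  · exact Module.Flat.lTensor_preserves_injective_linearMap _ N.injective_subtype
  · exact LinearMap.lTensor_surjective S N.mkQ_surjective
  · exact lTensor_exact S (LinearMap.exact_subtype_mkQ N) N.mkQ_surjective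

theorem Module.length_baseChange_of_isSimpleModule [IsLocalRing R]
    (N : Type*) [AddCommGroup N] [Module R N] [IsSimpleModule R N] :
    Module.length S (S ⊗[R] N) =
      Module.length S (S ⧸ (IsLocalRing.maximalIdeal R).map (algebraMap R S)) := by
  obtain ⟨m, hm, ⟨e⟩⟩ := isSimpleModule_iff_quot_maximal.mp ‹IsSimpleModule R N›
  obtain rfl := IsLocalRing.eq_maximalIdeal hm
  rw [(LinearEquiv.baseChange R S _ _ e).length_eq,
    (Algebra.TensorProduct.quotIdealMapEquivTensorQuot S (IsLocalRing.maximalIdeal R)).toLinearEquiv.length_eq]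

theorem Module.length_baseChange_of_flat [IsLocalRing R] [Module.Flat R S]
    {M : Type*} [AddCommGroup M] [Module R M] (hM : IsFiniteLength R M) :
    Module.length S (S ⊗[R] M) =
      Module.length S (S ⧸ (IsLocalRing.maximalIdeal R).map (algebraMap R S)) *
        Module.length R M := by
  induction hM with
  | of_subsingleton => simp
  | @of_simple_quotient M _ _ N _ _ ih =>
    have hM : Module.length R M = Module.length R N + 1 := by
      rw [Module.length_eq_add_of_exact N.subtype N.mkQ N.injective_subtype N.mkQ_surjective
        (LinearMap.exact_subtype_mkQ N), Module.length_eq_one R (M ⧸ N)]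
    rw [Module.length_baseChange_eq_add_of_flat N, ih,
      Module.length_baseChange_of_isSimpleModule (M ⧸ N), hM, mul_add, mul_one]

end BaseChange

/-- Remark 3.10 of the paper: if `R` is a local ring with maximal ideal `m`, `S` is a flat
commutative `R`-algebra and `M` is an `R`-module of finite length, then
`length_S (S ⊗_R M) = length_S (S/mS) * length_R M`. -/
theorem stmt_10 (R S M : Type*) [CommRing R] [IsLocalRing R]
    [CommRing S] [Algebra R S] [Module.Flat R S]
    [AddCommGroup M] [Module R M]
    (hM : IsFiniteLength R M) :
    moduleLength S (S ⊗[R] M) =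
      moduleLength S (S ⧸ (IsLocalRing.maximalIdeal R).map (algebraMap R S)) *
        moduleLength R M := by
  simp only [moduleLength_eq_length]
  exact Module.length_baseChange_of_flat hM
end

section
/- Let R be a commutative ring and x₁, x₂ ∈ R. Let E = R[X]/((X − x₁)(X − x₂)) and let α be the image of X in E. Then E is a free R-module with basis (1, α), the traces are Tr_{E/R}(α) = x₁ + x₂ and Tr_{E/R}(α²) = x₁² + x₂², and the discriminant of the basis (1, α), namely the determinant of the 2×2 matrix with entries Tr_{E/R}(bᵢ·bⱼ) for b₁ = 1, b₂ = α, equals (x₁ − x₂)². -/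
/-!
Multiplication by `α = root f` on the power basis of `R[X]/(f)`, `f` monic, has characteristic
polynomial `f`, so `Tr(α) = -f.nextCoeff = x₁ + x₂`. The relation `α² = (x₁ + x₂)α - x₁x₂` then
gives `Tr(α²) = (x₁ + x₂)² - 2x₁x₂`, and the discriminant of `(1, α)` is
`Tr(1)Tr(α²) - Tr(α)² = 2(x₁² + x₂²) - (x₁ + x₂)² = (x₁ - x₂)²`.
-/

open Polynomial

theorem Algebra.discr_fin_two {A B : Type*} [CommRing A] [CommRing B] [Algebra A B] (x y : B) :
    discr A ![x, y] = trace A B (x ^ 2) * trace A B (y ^ 2) - trace A B (x * y) ^ 2 := by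
  rw [discr_def, Matrix.det_fin_two]
  simp [traceMatrix_apply, traceForm_apply, sq, mul_comm y x]

namespace AdjoinRoot

variable {R : Type*} [CommRing R] {f : R[X]}

theorem exists_basis_fin_pow_root (hf : f.Monic) {n : ℕ} (hn : f.natDegree = n) :
    ∃ b : Module.Basis (Fin n) R (AdjoinRoot f), ∀ i, b i = root f ^ (i : ℕ) :=
  ⟨(powerBasis' hf).basis.reindex (finCongr hn), fun i => by simp; rfl⟩

theorem minpoly_root_of_monic (hf : f.Monic) : minpoly R (root f) = f := by
  nontriviality R
  refine (minpoly.unique' R _ hf (aeval_eq f ▸ mk_self) fun q hq => ?_).symm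
  refine or_iff_not_imp_left.2 fun hq0 hroot => ?_
  have := (powerBasis' hf).dim_le_degree_of_root hq0 hroot
  rw [powerBasis'_dim, ← degree_eq_natDegree hf.ne_zero] at this
  exact this.not_gt hq

theorem trace_root_of_monic (hf : f.Monic) :
    Algebra.trace R (AdjoinRoot f) (root f) = -f.nextCoeff := by
  rw [Algebra.trace_eq_matrix_trace (powerBasis' hf).basis, Matrix.trace_eq_neg_charpoly_nextCoeff,
    ← powerBasis'_gen hf, charpoly_leftMulMatrix, powerBasis'_gen, minpoly_root_of_monic hf]

end AdjoinRoot

section Quadratic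

variable {R : Type*} [CommRing R] (x₁ x₂ : R)

theorem monic_X_sub_C_mul_X_sub_C : ((X - C x₁) * (X - C x₂)).Monic :=
  (monic_X_sub_C x₁).mul (monic_X_sub_C x₂)

theorem natDegree_X_sub_C_mul_X_sub_C [Nontrivial R] :
    ((X - C x₁) * (X - C x₂)).natDegree = 2 := by
  rw [(monic_X_sub_C x₁).natDegree_mul (monic_X_sub_C x₂), natDegree_X_sub_C, natDegree_X_sub_C]

theorem nextCoeff_X_sub_C_mul_X_sub_C : ((X - C x₁) * (X - C x₂)).nextCoeff = -(x₁ + x₂) := by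
  rw [(monic_X_sub_C x₁).nextCoeff_mul (monic_X_sub_C x₂), nextCoeff_X_sub_C, nextCoeff_X_sub_C,
    neg_add]

namespace AdjoinRoot

theorem exists_basis_one_root_X_sub_C_mul_X_sub_C :
    ∃ b : Module.Basis (Fin 2) R (AdjoinRoot ((X - C x₁) * (X - C x₂))),
      b 0 = 1 ∧ b 1 = root ((X - C x₁) * (X - C x₂)) := by
  rcases subsingleton_or_nontrivial R with hR | hR
  · have := Module.subsingleton R (AdjoinRoot ((X - C x₁) * (X - C x₂)))
    exact ⟨default, Subsingleton.elim _ _, Subsingleton.elim _ _⟩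
  obtain ⟨b, hb⟩ := exists_basis_fin_pow_root (monic_X_sub_C_mul_X_sub_C x₁ x₂)
    (natDegree_X_sub_C_mul_X_sub_C x₁ x₂)
  exact ⟨b, by simp [hb], by simp [hb]⟩

theorem root_X_sub_C_mul_X_sub_C_sq :
    root ((X - C x₁) * (X - C x₂)) ^ 2 =
      (x₁ + x₂) • root ((X - C x₁) * (X - C x₂)) - (x₁ * x₂) • 1 := by
  have h := aeval_eq ((X - C x₁) * (X - C x₂)) ▸ mk_self
  simp only [map_mul, map_sub, aeval_X, aeval_C] at h
  rw [Algebra.smul_def, Algebra.smul_def, mul_one, map_add, map_mul]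
  linear_combination h

theorem trace_one_X_sub_C_mul_X_sub_C :
    Algebra.trace R (AdjoinRoot ((X - C x₁) * (X - C x₂))) 1 = 2 := by
  obtain ⟨b, -⟩ := exists_basis_one_root_X_sub_C_mul_X_sub_C x₁ x₂
  simpa [two_smul, one_add_one_eq_two] using Algebra.trace_algebraMap_of_basis b (1 : R)

theorem trace_root_X_sub_C_mul_X_sub_C :
    Algebra.trace R (AdjoinRoot ((X - C x₁) * (X - C x₂))) (root ((X - C x₁) * (X - C x₂))) =
      x₁ + x₂ := by
  rw [trace_root_of_monic (monic_X_sub_C_mul_X_sub_C x₁ x₂), nextCoeff_X_sub_C_mul_X_sub_C,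
    neg_neg]

theorem trace_root_sq_X_sub_C_mul_X_sub_C :
    Algebra.trace R (AdjoinRoot ((X - C x₁) * (X - C x₂))) (root ((X - C x₁) * (X - C x₂)) ^ 2) =
      x₁ ^ 2 + x₂ ^ 2 := by
  rw [root_X_sub_C_mul_X_sub_C_sq, map_sub, map_smul, map_smul, trace_root_X_sub_C_mul_X_sub_C,
    trace_one_X_sub_C_mul_X_sub_C, smul_eq_mul, smul_eq_mul]
  ring

end AdjoinRoot

end Quadratic

/-- The key local computation in the proof of Theorem 3.12 of the paper: for
`E = R[X]/((X - x₁)(X - x₂))` with `α` the image of `X`, `E` is free with basis `(1, α)`,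
`Tr(α) = x₁ + x₂`, `Tr(α²) = x₁² + x₂²`, and the discriminant of the basis `(1, α)` is
`(x₁ - x₂)²`. -/
theorem stmt_11 {R : Type*} [CommRing R] (x₁ x₂ : R) :
    ∃ b : Module.Basis (Fin 2) R (AdjoinRoot ((X - C x₁) * (X - C x₂))),
      b 0 = 1 ∧
      b 1 = AdjoinRoot.root ((X - C x₁) * (X - C x₂)) ∧
      Algebra.trace R (AdjoinRoot ((X - C x₁) * (X - C x₂)))
        (AdjoinRoot.root ((X - C x₁) * (X - C x₂))) = x₁ + x₂ ∧
      Algebra.trace R (AdjoinRoot ((X - C x₁) * (X - C x₂)))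
        (AdjoinRoot.root ((X - C x₁) * (X - C x₂)) ^ 2) = x₁ ^ 2 + x₂ ^ 2 ∧
      Algebra.discr R ![1, AdjoinRoot.root ((X - C x₁) * (X - C x₂))] = (x₁ - x₂) ^ 2 := by
  obtain ⟨b, hb0, hb1⟩ := AdjoinRoot.exists_basis_one_root_X_sub_C_mul_X_sub_C x₁ x₂
  refine ⟨b, hb0, hb1, AdjoinRoot.trace_root_X_sub_C_mul_X_sub_C x₁ x₂,
    AdjoinRoot.trace_root_sq_X_sub_C_mul_X_sub_C x₁ x₂, ?_⟩
  rw [Algebra.discr_fin_two, one_pow, one_mul, AdjoinRoot.trace_one_X_sub_C_mul_X_sub_C,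
    AdjoinRoot.trace_root_sq_X_sub_C_mul_X_sub_C, AdjoinRoot.trace_root_X_sub_C_mul_X_sub_C]
  ring
end
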